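/- The word-reversal anti-involution R composed with T = Ψ_{−t} intertwines interpolated products: T : (k⟨A⟩, ∗_r) → (k⟨A⟩, ∗_{1−r}) is an algebra isomorphism, i.e. T(u ∗_r v) = T(u) ∗_{1−r} T(v) for all u, v. -/

import Mathlib

/-!
Quasi-shuffle algebras (Hoffman–Ihara).  We model the span `kA` of the alphabet
(with its commutative associative product `⋄`, written `*` in `L`) as a
non-unital commutative `k`-algebra `L`, and the word algebra `k⟨A⟩` as the
tensor algebra `TensorAlgebra k L`, in which a word `a₁⋯aₙ` is the product
`ι a₁ * ⋯ * ι aₙ`.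
-/

open TensorAlgebra

variable (k : Type*) [Field k]
variable {L : Type*} [NonUnitalCommRing L] [Module k L]
  [SMulCommClass k L L] [IsScalarTower k L L]

def word (l : List L) : TensorAlgebra k L := (l.map fun a => TensorAlgebra.ι k a).prod

/-- The `⋄`-product of the letters of a nonempty block (junk value `0` on `[]`). -/
def blockProd : List L → L
  | [] => 0
  | a :: t => t.foldl (· * ·) a

/-- The Hoffman–Ihara operator `Ψ_f` on words, for `f = c₁t + c₂t² + ⋯`:
`Ψ_f(w) = Σ_{(i₁,…,i_m) composition of ℓ(w)} c_{i₁}⋯c_{i_m} I[w]`,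
written via the recursion on the first block. -/
def psi (c : ℕ → k) : List L → TensorAlgebra k L
  | [] => 1
  | a :: w => ∑ j ∈ Finset.range (w.length + 1),
      c (j + 1) • (TensorAlgebra.ι k (blockProd (a :: w.take j)) * psi c (w.drop j))
  termination_by l => l.length
  decreasing_by simp [List.length_drop] <;> omega

/-!
Write `Ψ_{α,β}` for `Ψ_f` with `f = αt/(1 - βt)` (`IsGeomPsi`), so `Σ^s = Ψ_{1,s}` and
`T = Ψ_{-1,0}`. With `D_a` (`mulHead`) multiplying the first letter of a word by `a`, `Ψ_{α,β}` is
the unique linear map with `Ψ(1) = 1` and `Ψ(a x) = α a Ψ(x) + β Ψ(D_a x)`, and it commutes with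
every `D_a`; hence `Ψ_{α,β} ∘ Ψ_{α',β'} = Ψ_{αα', β' + βα'}`, as for the Möbius maps `f`.

The heart of the proof is that `Φ = Ψ_{-1,-1} = Σ^1 T` is an endomorphism of `*`. Indeed
`Φ(a x) = -E_a Φ(x)` with `E_a = a· + D_a` (`prependMerge`), and a direct expansion shows that the
`E_a` satisfy the quasi-shuffle recursion with the sign of the contraction term reversed, which is
exactly what is needed for `Φ(a x * b y) = Φ(a x) * Φ(b y)` by induction on length. Then
`T(u ∗_r v) = T Σ^{-r}(Σ^r u * Σ^r v) = Σ^{r-1} Φ(Σ^r u * Σ^r v) = Σ^{r-1}(Φ Σ^r u * Φ Σ^r v)`,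
and `Φ Σ^r = Σ^{1-r} T`.
-/
section

variable {k}
variable {L : Type*} [NonUnitalCommRing L] [Module k L]

@[simp] lemma word_nil : word k ([] : List L) = 1 := rfl

@[simp] lemma word_cons (a : L) (l : List L) : word k (a :: l) = ι k a * word k l := by
  simp [word]

variable (k) in
lemma span_range_word : Submodule.span k (Set.range (word k : List L → TensorAlgebra k L)) = ⊤ := by
  refine eq_top_iff.2 fun x _ => ?_
  have hx : x ∈ Subalgebra.toSubmodule (Algebra.adjoin k (Set.range (ι k (M := L)))) := by
    simp [adjoin_range_ι]
  rw [Algebra.adjoin_eq_span] at hx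
  refine Submodule.span_mono (fun y hy => ?_) hx
  induction hy using Submonoid.closure_induction with
  | mem y hy => obtain ⟨a, rfl⟩ := hy; exact ⟨[a], by simp⟩
  | one => exact ⟨[], rfl⟩
  | mul y z _ _ hy hz =>
    obtain ⟨u, rfl⟩ := hy
    obtain ⟨v, rfl⟩ := hz
    exact ⟨u ++ v, by simp [word]⟩

lemma LinearMap.ext_word {M : Type*} [AddCommGroup M] [Module k M]
    {f g : TensorAlgebra k L →ₗ[k] M} (h : ∀ w, f (word k w) = g (word k w)) : f = g :=
  LinearMap.ext_on_range (span_range_word k) h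

lemma LinearMap.ext_word₂ {M : Type*} [AddCommGroup M] [Module k M]
    {f g : TensorAlgebra k L →ₗ[k] TensorAlgebra k L →ₗ[k] M}
    (h : ∀ u v, f (word k u) (word k v) = g (word k u) (word k v)) : f = g :=
  LinearMap.ext_word fun u => LinearMap.ext_word (h u)

@[simp] lemma psi_nil (c : ℕ → k) : psi k c ([] : List L) = 1 := by
  rw [psi]

@[simp] lemma blockProd_singleton (a : L) : blockProd [a] = a := rfl

lemma psi_cons (c : ℕ → k) (a : L) (w : List L) :
    psi k c (a :: w) = ∑ j ∈ Finset.range (w.length + 1),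
      c (j + 1) • (ι k (blockProd (a :: w.take j)) * psi k c (w.drop j)) := by
  rw [psi]

lemma psi_geom_singleton (α β : k) (a : L) :
    psi k (fun n => α * β ^ (n - 1)) [a] = α • ι k a := by
  simp [psi_cons]

lemma psi_geom_cons_cons (α β : k) (a b : L) (w : List L) :
    psi k (fun n => α * β ^ (n - 1)) (a :: b :: w)
      = α • (ι k a * psi k (fun n => α * β ^ (n - 1)) (b :: w))
        + β • psi k (fun n => α * β ^ (n - 1)) ((a * b) :: w) := by
  rw [psi_cons, Finset.sum_range_succ', add_comm, psi_cons (a := a * b), Finset.smul_sum]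
  congr 1
  · simp
  · refine Finset.sum_congr (by simp) fun j _ => ?_
    rw [smul_smul, Nat.add_sub_cancel, Nat.add_sub_cancel]
    congr 1
    ring

lemma psi_neg_one_zero (w : List L) :
    psi k (fun n => -1 * (0 : k) ^ (n - 1)) w = (-1 : k) ^ w.length • word k w := by
  induction w with
  | nil => simp
  | cons a w ih =>
    have hcons : psi k (fun n => -1 * (0 : k) ^ (n - 1)) (a :: w)
        = -(ι k a * psi k (fun n => -1 * (0 : k) ^ (n - 1)) w) := by
      cases w with
      | nil => rw [psi_geom_singleton, psi_nil, mul_one, neg_one_smul]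
      | cons b w => rw [psi_geom_cons_cons, zero_smul, add_zero, neg_one_smul]
    rw [hcons, ih, mul_smul_comm, List.length_cons, pow_succ, mul_neg_one, neg_smul, word_cons]

/-- `F` acts on words as `Ψ_f` with `f = αt/(1 - βt)`. -/
def IsGeomPsi (α β : k) (F : TensorAlgebra k L →ₗ[k] TensorAlgebra k L) : Prop :=
  ∀ w, F (word k w) = psi k (fun n => α * β ^ (n - 1)) w

namespace IsGeomPsi

variable {α β α' β' : k} {F G : TensorAlgebra k L →ₗ[k] TensorAlgebra k L}

lemma of_psi_pow {s : k} (h : ∀ w, F (word k w) = psi k (fun n => s ^ (n - 1)) w) :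
    IsGeomPsi 1 s F := fun w => by
  simpa only [one_mul] using h w

lemma of_neg_one_pow_smul (h : ∀ w, F (word k w) = (-1 : k) ^ w.length • word k w) :
    IsGeomPsi (-1) 0 F := fun w => by
  rw [h, psi_neg_one_zero]

lemma map_one (hF : IsGeomPsi α β F) : F 1 = 1 := by
  simpa using hF []

lemma unique (hF : IsGeomPsi α β F) (hG : IsGeomPsi α' β' G) (hα : α = α') (hβ : β = β') :
    F = G :=
  LinearMap.ext_word fun w => by rw [hF, hG, hα, hβ]

end IsGeomPsi

structure IsQuasiShuffle (m : TensorAlgebra k L →ₗ[k] TensorAlgebra k L →ₗ[k] TensorAlgebra k L) :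
    Prop where
  one_left : ∀ x, m 1 x = x
  one_right : ∀ x, m x 1 = x
  ι_mul_ι_mul_word : ∀ (a b : L) (v w : List L),
    m (ι k a * word k v) (ι k b * word k w)
      = ι k a * m (word k v) (ι k b * word k w) + ι k b * m (ι k a * word k v) (word k w)
        + ι k (a * b) * m (word k v) (word k w)

lemma IsQuasiShuffle.ι_mul_ι_mul
    {m : TensorAlgebra k L →ₗ[k] TensorAlgebra k L →ₗ[k] TensorAlgebra k L}
    (hm : IsQuasiShuffle m) (a b : L) (x y : TensorAlgebra k L) :
    m (ι k a * x) (ι k b * y)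
      = ι k a * m x (ι k b * y) + ι k b * m (ι k a * x) y + ι k (a * b) * m x y := by
  have h : m.compl₁₂ (LinearMap.mulLeft k (ι k a)) (LinearMap.mulLeft k (ι k b))
      = (m.compl₂ (LinearMap.mulLeft k (ι k b))).compr₂ (LinearMap.mulLeft k (ι k a))
        + (m.comp (LinearMap.mulLeft k (ι k a))).compr₂ (LinearMap.mulLeft k (ι k b))
        + m.compr₂ (LinearMap.mulLeft k (ι k (a * b))) :=
    LinearMap.ext_word₂ (hm.ι_mul_ι_mul_word a b)
  simpa using LinearMap.congr_fun₂ h x y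

variable [SMulCommClass k L L]

variable (k) in
/-- `mulHead k a x` is read off from the action of `x` on `(1, 0)`, the letter `c` acting by
`(p, q) ↦ (c p, (a * c) p)`. -/
def headMulPair (a : L) : L →ₗ[k] Module.End k (TensorAlgebra k L × TensorAlgebra k L) where
  toFun c := (LinearMap.mulLeft k (ι k c) ∘ₗ LinearMap.fst k _ _).prod
    (LinearMap.mulLeft k (ι k (a * c)) ∘ₗ LinearMap.fst k _ _)
  map_add' c d := by ext <;> simp [mul_add, add_mul]
  map_smul' r c := by ext <;> simp [mul_smul_comm]

variable (k) in
def mulHead (a : L) : TensorAlgebra k L →ₗ[k] TensorAlgebra k L :=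
  LinearMap.snd k _ _ ∘ₗ LinearMap.applyₗ (1, 0) ∘ₗ (lift k (headMulPair k a)).toLinearMap

@[simp] lemma headMulPair_apply (a c : L) (p : TensorAlgebra k L × TensorAlgebra k L) :
    headMulPair k a c p = (ι k c * p.1, ι k (a * c) * p.1) := rfl

lemma fst_lift_headMulPair_apply (a : L) (x : TensorAlgebra k L)
    (p : TensorAlgebra k L × TensorAlgebra k L) :
    (lift k (headMulPair k a) x p).1 = x * p.1 := by
  induction x using TensorAlgebra.induction generalizing p with
  | algebraMap r => simp [Algebra.smul_def]
  | ι c => simp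
  | mul x y hx hy => simp [hx, hy, mul_assoc]
  | add x y hx hy => simp [hx, hy, add_mul]

@[simp] lemma mulHead_one (a : L) : mulHead k a 1 = 0 := by
  simp [mulHead]

@[simp] lemma mulHead_ι_mul (a c : L) (x : TensorAlgebra k L) :
    mulHead k a (ι k c * x) = ι k (a * c) * x := by
  simp [mulHead, fst_lift_headMulPair_apply]

@[simp] lemma mulHead_ι (a c : L) : mulHead k a (ι k c) = ι k (a * c) := by
  simpa using mulHead_ι_mul a c 1

lemma mulHead_word_cons (a c : L) (w : List L) :
    mulHead k a (word k (c :: w)) = word k ((a * c) :: w) := by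
  simp

lemma mulHead_psi_geom (α β : k) (a c : L) (w : List L) :
    mulHead k a (psi k (fun n => α * β ^ (n - 1)) (c :: w))
      = psi k (fun n => α * β ^ (n - 1)) ((a * c) :: w) := by
  induction w generalizing c with
  | nil => simp [psi_geom_singleton]
  | cons d w ih => simp [psi_geom_cons_cons, ih, mul_assoc]

namespace IsGeomPsi

variable {α β α' β' : k} {F G : TensorAlgebra k L →ₗ[k] TensorAlgebra k L}

lemma map_ι_mul (hF : IsGeomPsi α β F) (a : L) (x : TensorAlgebra k L) :
    F (ι k a * x) = α • (ι k a * F x) + β • F (mulHead k a x) := by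
  have h : F ∘ₗ LinearMap.mulLeft k (ι k a)
      = α • (LinearMap.mulLeft k (ι k a) ∘ₗ F) + β • (F ∘ₗ mulHead k a) := by
    refine LinearMap.ext_word fun w => ?_
    simp only [LinearMap.comp_apply, LinearMap.add_apply, LinearMap.smul_apply,
      LinearMap.mulLeft_apply, ← word_cons, hF _]
    cases w with
    | nil => simp [psi_geom_singleton]
    | cons b w => rw [mulHead_word_cons, hF, psi_geom_cons_cons]
  simpa using LinearMap.congr_fun h x

lemma mulHead_comm (hF : IsGeomPsi α β F) (a : L) (x : TensorAlgebra k L) :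
    mulHead k a (F x) = F (mulHead k a x) := by
  have h : mulHead k a ∘ₗ F = F ∘ₗ mulHead k a := by
    refine LinearMap.ext_word fun w => ?_
    cases w with
    | nil => simp [hF.map_one]
    | cons c w => simp only [LinearMap.comp_apply, mulHead_word_cons, hF _, mulHead_psi_geom]
  exact LinearMap.congr_fun h x

lemma of_map_ι_mul (h1 : F 1 = 1)
    (h : ∀ a x, F (ι k a * x) = α • (ι k a * F x) + β • F (mulHead k a x)) :
    IsGeomPsi α β F
  | [] => by simpa using h1
  | [a] => by simpa [h1, psi_geom_singleton] using h a 1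
  | a :: b :: w => by
    rw [psi_geom_cons_cons, ← of_map_ι_mul h1 h (b :: w), ← of_map_ι_mul h1 h ((a * b) :: w),
      word_cons, h, mulHead_word_cons]
termination_by w => w.length

lemma comp (hF : IsGeomPsi α β F) (hG : IsGeomPsi α' β' G) :
    IsGeomPsi (α * α') (β' + β * α') (F ∘ₗ G) := by
  refine of_map_ι_mul (by simp [hF.map_one, hG.map_one]) fun a x => ?_
  simp only [LinearMap.comp_apply, hG.map_ι_mul, map_add, map_smul, hF.map_ι_mul,
    hG.mulHead_comm]
  module

end IsGeomPsi

variable (k) in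
def prependMerge (a : L) : TensorAlgebra k L →ₗ[k] TensorAlgebra k L :=
  LinearMap.mulLeft k (ι k a) + mulHead k a

variable {m : TensorAlgebra k L →ₗ[k] TensorAlgebra k L →ₗ[k] TensorAlgebra k L}

lemma IsQuasiShuffle.prependMerge_prependMerge (hm : IsQuasiShuffle m) (a b : L)
    (x y : TensorAlgebra k L) :
    m (prependMerge k a x) (prependMerge k b y)
      = prependMerge k a (m x (prependMerge k b y)) + prependMerge k b (m (prependMerge k a x) y)
        - prependMerge k (a * b) (m x y) := by
  have h : m.compl₁₂ (prependMerge k a) (prependMerge k b)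
      = (m.compl₂ (prependMerge k b)).compr₂ (prependMerge k a)
        + (m.comp (prependMerge k a)).compr₂ (prependMerge k b)
        - m.compr₂ (prependMerge k (a * b)) := by
    refine LinearMap.ext_word₂ fun u v => ?_
    cases u <;> cases v <;>
      simp only [LinearMap.compl₁₂_apply, LinearMap.compr₂_apply, LinearMap.compl₂_apply,
        LinearMap.comp_apply, LinearMap.add_apply, LinearMap.sub_apply, prependMerge,
        LinearMap.mulLeft_apply, word_nil, word_cons, mulHead_one, mulHead_ι_mul, add_zero,
        map_add, hm.ι_mul_ι_mul, hm.one_left, hm.one_right, mul_add, mul_assoc] <;>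
      simp only [mul_one, mul_comm, mul_left_comm] <;>
      abel
  simpa using LinearMap.congr_fun₂ h x y

namespace IsGeomPsi

variable {Φ : TensorAlgebra k L →ₗ[k] TensorAlgebra k L}

lemma neg_one_map_ι_mul (hΦ : IsGeomPsi (-1 : k) (-1) Φ) (a : L) (x : TensorAlgebra k L) :
    Φ (ι k a * x) = -prependMerge k a (Φ x) := by
  rw [hΦ.map_ι_mul, ← hΦ.mulHead_comm, prependMerge, LinearMap.add_apply,
    LinearMap.mulLeft_apply, neg_one_smul, neg_one_smul, neg_add]

lemma neg_one_map_quasiShuffle_word (hΦ : IsGeomPsi (-1 : k) (-1) Φ) (hm : IsQuasiShuffle m) :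
    ∀ u v : List L, Φ (m (word k u) (word k v)) = m (Φ (word k u)) (Φ (word k v))
  | [], v => by simp [hΦ.map_one, hm.one_left]
  | a :: u, [] => by simp [hΦ.map_one, hm.one_right]
  | a :: u, b :: v => by
    have h₁ := neg_one_map_quasiShuffle_word hΦ hm u (b :: v)
    have h₂ := neg_one_map_quasiShuffle_word hΦ hm (a :: u) v
    have h₃ := neg_one_map_quasiShuffle_word hΦ hm u v
    simp only [word_cons] at h₁ h₂ ⊢
    rw [hm.ι_mul_ι_mul, map_add, map_add, neg_one_map_ι_mul hΦ, neg_one_map_ι_mul hΦ,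
      neg_one_map_ι_mul hΦ, h₁, h₂, h₃]
    simp only [neg_one_map_ι_mul hΦ, map_neg, LinearMap.neg_apply, neg_neg,
      hm.prependMerge_prependMerge]
    abel
termination_by u v => u.length + v.length

lemma neg_one_map_quasiShuffle (hΦ : IsGeomPsi (-1 : k) (-1) Φ) (hm : IsQuasiShuffle m)
    (x y : TensorAlgebra k L) : Φ (m x y) = m (Φ x) (Φ y) := by
  have h : m.compr₂ Φ = m.compl₁₂ Φ Φ :=
    LinearMap.ext_word₂ (neg_one_map_quasiShuffle_word hΦ hm)
  simpa using LinearMap.congr_fun₂ h x y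

end IsGeomPsi

end

/--
`T = Ψ_{−t}` is an algebra isomorphism
`(k⟨A⟩, ∗_r) → (k⟨A⟩, ∗_{1−r})`, i.e. `T(u ∗_r v) = T(u) ∗_{1−r} T(v)`,
where `u ∗_s v = Σ^{−s}(Σ^s u * Σ^s v)`.
-/
theorem stmt9 (r : k)
    (m : TensorAlgebra k L →ₗ[k] TensorAlgebra k L →ₗ[k] TensorAlgebra k L)
    (hmul : ∀ x, m 1 x = x) (hmur : ∀ x, m x 1 = x)
    (hmrec : ∀ (a b : L) (v w : List L),
      m (TensorAlgebra.ι k a * word k v) (TensorAlgebra.ι k b * word k w)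
        = TensorAlgebra.ι k a * m (word k v) (TensorAlgebra.ι k b * word k w)
          + TensorAlgebra.ι k b * m (TensorAlgebra.ι k a * word k v) (word k w)
          + TensorAlgebra.ι k (a * b) * m (word k v) (word k w))
    (Sr Snr S1r Sn1r : TensorAlgebra k L →ₗ[k] TensorAlgebra k L)
    (hSr : ∀ w : List L, Sr (word k w) = psi k (fun n => r ^ (n - 1)) w)
    (hSnr : ∀ w : List L, Snr (word k w) = psi k (fun n => (-r) ^ (n - 1)) w)
    (hS1r : ∀ w : List L, S1r (word k w) = psi k (fun n => (1 - r) ^ (n - 1)) w)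
    (hSn1r : ∀ w : List L, Sn1r (word k w) = psi k (fun n => (r - 1) ^ (n - 1)) w)
    (T : TensorAlgebra k L →ₗ[k] TensorAlgebra k L)
    (hT : ∀ w : List L, T (word k w) = ((-1 : k) ^ w.length) • word k w)
    (mr m1r : TensorAlgebra k L → TensorAlgebra k L → TensorAlgebra k L)
    (hmr : ∀ x y, mr x y = Snr (m (Sr x) (Sr y)))
    (hm1r : ∀ x y, m1r x y = Sn1r (m (S1r x) (S1r y))) :
    ∀ u v : TensorAlgebra k L, T (mr u v) = m1r (T u) (T v) := by
  have hSr' := IsGeomPsi.of_psi_pow hSr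
  have hSnr' := IsGeomPsi.of_psi_pow hSnr
  have hS1r' := IsGeomPsi.of_psi_pow hS1r
  have hSn1r' := IsGeomPsi.of_psi_pow hSn1r
  have hT' := IsGeomPsi.of_neg_one_pow_smul hT
  set Φ := S1r ∘ₗ Sr ∘ₗ T
  have hΦ : IsGeomPsi (-1 : k) (-1) Φ := by
    convert hS1r'.comp (hSr'.comp hT') using 1 <;> ring
  have hTSnr : ∀ x, T (Snr x) = Sr (T x) :=
    LinearMap.congr_fun ((hT'.comp hSnr').unique (hSr'.comp hT') (by ring) (by ring))
  have hSrT : ∀ x, Sr (T x) = Sn1r (Φ x) :=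
    LinearMap.congr_fun ((hSr'.comp hT').unique (hSn1r'.comp hΦ) (by ring) (by ring))
  have hΦSr : ∀ x, Φ (Sr x) = S1r (T x) :=
    LinearMap.congr_fun ((hΦ.comp hSr').unique (hS1r'.comp hT') (by ring) (by ring))
  intro u v
  rw [hmr, hm1r, hTSnr, hSrT, hΦ.neg_one_map_quasiShuffle ⟨hmul, hmur, hmrec⟩, hΦSr, hΦSr]
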